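/- arXiv:cond-mat/0703319 — 4 statements merged into one kernel-verified Lean document; each statement's English description precedes it below -/
import Mathlib

section
/- Let η ∈ ℂ and let λ, μ, ν ∈ ℂ be such that sinh(λ−μ+η), sinh(λ−ν+η) and sinh(μ−ν+η) are all nonzero. Then the six-vertex R-matrix satisfies the Yang–Baxter equation R₁₂(λ−μ) R₁₃(λ−ν) R₂₃(μ−ν) = R₂₃(μ−ν) R₁₃(λ−ν) R₁₂(λ−μ) as an identity of linear operators on ℂ² ⊗ ℂ² ⊗ ℂ². -/
open Complex Matrix

private lemma sinh_eq' (z : ℂ) : Complex.sinh z = (Complex.exp z - Complex.exp (-z)) / 2 := by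
  rw [Complex.sinh]

/-- The six-vertex R-matrix on ℂ² ⊗ ℂ², in the basis `e₁⊗e₁, e₁⊗e₂, e₂⊗e₁, e₂⊗e₂`
(encoded as pairs `(0,0), (0,1), (1,0), (1,1)` in `Fin 2 × Fin 2`). -/
noncomputable def Rmat (η lam : ℂ) : Matrix (Fin 2 × Fin 2) (Fin 2 × Fin 2) ℂ :=
  Matrix.of fun p q =>
    if p = q then (if p.1 = p.2 then 1 else Complex.sinh lam / Complex.sinh (lam + η))
    else if p.1 = q.2 ∧ p.2 = q.1 ∧ p.1 ≠ p.2 then Complex.sinh η / Complex.sinh (lam + η)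
    else 0

/-- `R₁₂(λ)`: the R-matrix acting on the first two factors of ℂ² ⊗ ℂ² ⊗ ℂ². -/
noncomputable def R12 (η lam : ℂ) :
    Matrix (Fin 2 × Fin 2 × Fin 2) (Fin 2 × Fin 2 × Fin 2) ℂ :=
  Matrix.of fun p q => Rmat η lam (p.1, p.2.1) (q.1, q.2.1) * (if p.2.2 = q.2.2 then 1 else 0)

/-- `R₁₃(λ)`: the R-matrix acting on the first and third factors of ℂ² ⊗ ℂ² ⊗ ℂ². -/
noncomputable def R13 (η lam : ℂ) :
    Matrix (Fin 2 × Fin 2 × Fin 2) (Fin 2 × Fin 2 × Fin 2) ℂ :=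
  Matrix.of fun p q => Rmat η lam (p.1, p.2.2) (q.1, q.2.2) * (if p.2.1 = q.2.1 then 1 else 0)

/-- `R₂₃(λ)`: the R-matrix acting on the last two factors of ℂ² ⊗ ℂ² ⊗ ℂ². -/
noncomputable def R23 (η lam : ℂ) :
    Matrix (Fin 2 × Fin 2 × Fin 2) (Fin 2 × Fin 2 × Fin 2) ℂ :=
  Matrix.of fun p q => Rmat η lam (p.2.1, p.2.2) (q.2.1, q.2.2) * (if p.1 = q.1 then 1 else 0)

/-- Polynomial (unnormalized) version of `Rmat`. -/
noncomputable def Qmat (η lam : ℂ) : Matrix (Fin 2 × Fin 2) (Fin 2 × Fin 2) ℂ :=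
  Matrix.of fun p q =>
    if p = q then (if p.1 = p.2 then Complex.sinh (lam + η) else Complex.sinh lam)
    else if p.1 = q.2 ∧ p.2 = q.1 ∧ p.1 ≠ p.2 then Complex.sinh η
    else 0

noncomputable def Q12 (η lam : ℂ) :
    Matrix (Fin 2 × Fin 2 × Fin 2) (Fin 2 × Fin 2 × Fin 2) ℂ :=
  Matrix.of fun p q => Qmat η lam (p.1, p.2.1) (q.1, q.2.1) * (if p.2.2 = q.2.2 then 1 else 0)

noncomputable def Q13 (η lam : ℂ) :
    Matrix (Fin 2 × Fin 2 × Fin 2) (Fin 2 × Fin 2 × Fin 2) ℂ :=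
  Matrix.of fun p q => Qmat η lam (p.1, p.2.2) (q.1, q.2.2) * (if p.2.1 = q.2.1 then 1 else 0)

noncomputable def Q23 (η lam : ℂ) :
    Matrix (Fin 2 × Fin 2 × Fin 2) (Fin 2 × Fin 2 × Fin 2) ℂ :=
  Matrix.of fun p q => Qmat η lam (p.2.1, p.2.2) (q.2.1, q.2.2) * (if p.1 = q.1 then 1 else 0)

lemma hRmat (η lam : ℂ) (h : Complex.sinh (lam + η) ≠ 0) :
    Rmat η lam = (Complex.sinh (lam + η))⁻¹ • Qmat η lam := by
  ext p q
  simp only [Rmat, Qmat, Matrix.smul_apply, Matrix.of_apply, smul_eq_mul]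
  split_ifs <;> field_simp <;> simp

lemma hR12 (η lam : ℂ) (h : Complex.sinh (lam + η) ≠ 0) :
    R12 η lam = (Complex.sinh (lam + η))⁻¹ • Q12 η lam := by
  ext p q
  simp only [R12, Q12, hRmat η lam h, Matrix.smul_apply, Matrix.of_apply, smul_eq_mul]
  ring

lemma hR13 (η lam : ℂ) (h : Complex.sinh (lam + η) ≠ 0) :
    R13 η lam = (Complex.sinh (lam + η))⁻¹ • Q13 η lam := by
  ext p q
  simp only [R13, Q13, hRmat η lam h, Matrix.smul_apply, Matrix.of_apply, smul_eq_mul]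
  ring

lemma hR23 (η lam : ℂ) (h : Complex.sinh (lam + η) ≠ 0) :
    R23 η lam = (Complex.sinh (lam + η))⁻¹ • Q23 η lam := by
  ext p q
  simp only [R23, Q23, hRmat η lam h, Matrix.smul_apply, Matrix.of_apply, smul_eq_mul]
  ring

set_option maxHeartbeats 0 in
/-- The polynomial Yang–Baxter equation for the unnormalized matrices. -/
lemma qybe (η lam mu nu : ℂ) :
    Q12 η (lam - mu) * Q13 η (lam - nu) * Q23 η (mu - nu) =
      Q23 η (mu - nu) * Q13 η (lam - nu) * Q12 η (lam - mu) := by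
  ext ⟨a, b, c⟩ ⟨d, e, f⟩
  fin_cases a <;> fin_cases b <;> fin_cases c <;> fin_cases d <;> fin_cases e <;> fin_cases f <;>
    · simp only [Matrix.mul_apply, Q12, Q13, Q23, Qmat, Matrix.of_apply, Fintype.sum_prod_type,
        Fin.sum_univ_two, Prod.mk.injEq]
      norm_num
      try ring1
      try
        simp only [sinh_eq', Complex.exp_add, Complex.exp_sub, Complex.exp_neg]
        field_simp [Complex.exp_ne_zero]
        repeat
          first
          | rw [div_add_div _ _ (by simp) (by simp)]
          | rw [div_sub_div _ _ (by simp) (by simp)]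
          | rw [div_add' _ _ _ (by simp)]
          | rw [add_div' _ _ _ (by simp)]
          | rw [div_sub' _ _ _ (by simp)]
          | rw [sub_div' _ _ _ (by simp)]
        try rw [div_eq_div_iff (by simp) (by simp)]
        try rw [div_eq_iff (by simp)]
        try rw [eq_div_iff (by simp)]
        ring

/-- The six-vertex R-matrix satisfies the Yang–Baxter equation
`R₁₂(λ−μ) R₁₃(λ−ν) R₂₃(μ−ν) = R₂₃(μ−ν) R₁₃(λ−ν) R₁₂(λ−μ)` on ℂ² ⊗ ℂ² ⊗ ℂ². -/
theorem yang_baxter (η lam mu nu : ℂ)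
    (h1 : Complex.sinh (lam - mu + η) ≠ 0)
    (h2 : Complex.sinh (lam - nu + η) ≠ 0)
    (h3 : Complex.sinh (mu - nu + η) ≠ 0) :
    R12 η (lam - mu) * R13 η (lam - nu) * R23 η (mu - nu) =
      R23 η (mu - nu) * R13 η (lam - nu) * R12 η (lam - mu) := by
  rw [hR12 η (lam - mu) h1, hR13 η (lam - nu) h2, hR23 η (mu - nu) h3]
  simp only [Matrix.smul_mul, Matrix.mul_smul, smul_smul]
  rw [qybe]
  congr 1
  ring
end

section
/- Let L ≥ 1, η ∈ ℂ, and λ, μ ∈ ℂ with sinh(λ+η) ≠ 0, sinh(μ+η) ≠ 0 and sinh(λ−μ+η) ≠ 0. Then the creation operators of the algebraic Bethe ansatz commute: B(λ) B(μ) = B(μ) B(λ) as operators on (ℂ²)^{⊗L}. -/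
open Complex Matrix

/-- Basis states of the chain `(ℂ²)^{⊗L}`. -/
abbrev Chain (L : ℕ) := Fin L → Fin 2

/-- `R_{aj}(λ)`: the R-matrix acting on the auxiliary factor and the `j`-th site of the
chain, and as the identity on all other sites. -/
noncomputable def Raux (L : ℕ) (η lam : ℂ) (j : Fin L) :
    Matrix (Fin 2 × Chain L) (Fin 2 × Chain L) ℂ :=
  Matrix.of fun p q =>
    Rmat η lam (p.1, p.2 j) (q.1, q.2 j) * (if ∀ k, k ≠ j → p.2 k = q.2 k then 1 else 0)

/-- The monodromy matrix `𝒯_a(λ) = R_{aL}(λ) ⋯ R_{a2}(λ) R_{a1}(λ)` on `ℂ²_a ⊗ (ℂ²)^{⊗L}`. -/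
noncomputable def monodromy (L : ℕ) (η lam : ℂ) :
    Matrix (Fin 2 × Chain L) (Fin 2 × Chain L) ℂ :=
  ((List.ofFn fun j : Fin L => Raux L η lam j).reverse).prod

/-- `A(λ)`, the upper-left block of the monodromy matrix w.r.t. the auxiliary space. -/
noncomputable def Aop (L : ℕ) (η lam : ℂ) : Matrix (Chain L) (Chain L) ℂ :=
  Matrix.of fun v w => monodromy L η lam (0, v) (0, w)

/-- `B(λ)`, the upper-right block of the monodromy matrix w.r.t. the auxiliary space. -/
noncomputable def Bop (L : ℕ) (η lam : ℂ) : Matrix (Chain L) (Chain L) ℂ :=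
  Matrix.of fun v w => monodromy L η lam (0, v) (1, w)

/-- `C(λ)`, the lower-left block of the monodromy matrix w.r.t. the auxiliary space. -/
noncomputable def Cop (L : ℕ) (η lam : ℂ) : Matrix (Chain L) (Chain L) ℂ :=
  Matrix.of fun v w => monodromy L η lam (1, v) (0, w)

/-- `D(λ)`, the lower-right block of the monodromy matrix w.r.t. the auxiliary space. -/
noncomputable def Dop (L : ℕ) (η lam : ℂ) : Matrix (Chain L) (Chain L) ℂ :=
  Matrix.of fun v w => monodromy L η lam (1, v) (1, w)

/-- The transfer matrix `T(λ) = Tr_a 𝒯_a(λ) = A(λ) + D(λ)` on `(ℂ²)^{⊗L}`. -/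
noncomputable def transfer (L : ℕ) (η lam : ℂ) : Matrix (Chain L) (Chain L) ℂ :=
  Matrix.of fun v w => ∑ a : Fin 2, monodromy L η lam (a, v) (a, w)

namespace BCaux

abbrev T3 := Fin 2 × Fin 2 × Fin 2
abbrev I2 (L : ℕ) := Fin 2 × Fin 2 × Chain L

noncomputable def S12 (η x : ℂ) : Matrix T3 T3 ℂ :=
  Matrix.of fun p q => Rmat η x (p.1, p.2.1) (q.1, q.2.1) * (if p.2.2 = q.2.2 then 1 else 0)
noncomputable def S13 (η x : ℂ) : Matrix T3 T3 ℂ :=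
  Matrix.of fun p q => Rmat η x (p.1, p.2.2) (q.1, q.2.2) * (if p.2.1 = q.2.1 then 1 else 0)
noncomputable def S23 (η x : ℂ) : Matrix T3 T3 ℂ :=
  Matrix.of fun p q => Rmat η x (p.2.1, p.2.2) (q.2.1, q.2.2) * (if p.1 = q.1 then 1 else 0)

noncomputable def Rp (η x : ℂ) : Matrix (Fin 2 × Fin 2) (Fin 2 × Fin 2) ℂ :=
  Matrix.of fun p q =>
    if p = q then (if p.1 = p.2 then Complex.sinh (x + η) else Complex.sinh x)
    else if p.1 = q.2 ∧ p.2 = q.1 ∧ p.1 ≠ p.2 then Complex.sinh η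
    else 0

noncomputable def S12p (η x : ℂ) : Matrix T3 T3 ℂ :=
  Matrix.of fun p q => Rp η x (p.1, p.2.1) (q.1, q.2.1) * (if p.2.2 = q.2.2 then 1 else 0)
noncomputable def S13p (η x : ℂ) : Matrix T3 T3 ℂ :=
  Matrix.of fun p q => Rp η x (p.1, p.2.2) (q.1, q.2.2) * (if p.2.1 = q.2.1 then 1 else 0)
noncomputable def S23p (η x : ℂ) : Matrix T3 T3 ℂ :=
  Matrix.of fun p q => Rp η x (p.2.1, p.2.2) (q.2.1, q.2.2) * (if p.1 = q.1 then 1 else 0)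

lemma sinhE (z : ℂ) : Complex.sinh z = (Complex.exp z - Complex.exp (-z))/2 := by
  rw [Complex.sinh]

set_option maxHeartbeats 4000000 in
lemma YBEp (η lam mu : ℂ) :
    S12p η (lam - mu) * S13p η lam * S23p η mu = S23p η mu * S13p η lam * S12p η (lam - mu) := by
  ext ⟨a, b, c⟩ ⟨d, e, f⟩
  fin_cases a <;> fin_cases b <;> fin_cases c <;> fin_cases d <;> fin_cases e <;> fin_cases f <;>
  · simp only [Matrix.mul_apply, Fintype.sum_prod_type, Fin.sum_univ_two,
      S12p, S13p, S23p, Rp, Matrix.of_apply, Prod.mk.injEq]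
    norm_num
    first
    | done
    | (simp only [sinhE]
       field_simp
       try ring_nf
       try simp only [← Complex.exp_nat_mul, ← Complex.exp_add, ← Complex.exp_neg]
       try ring_nf
       try simp only [← Complex.exp_nat_mul, ← Complex.exp_add, ← Complex.exp_neg]
       try ring_nf)

lemma S12_eq (η x : ℂ) (h : Complex.sinh (x + η) ≠ 0) :
    S12 η x = (Complex.sinh (x + η))⁻¹ • S12p η x := by
  ext ⟨a, b, c⟩ ⟨d, e, f⟩
  simp only [S12, S12p, Rmat, Rp, Matrix.smul_apply, Matrix.of_apply, smul_eq_mul]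
  split_ifs <;> field_simp <;> ring

lemma S13_eq (η x : ℂ) (h : Complex.sinh (x + η) ≠ 0) :
    S13 η x = (Complex.sinh (x + η))⁻¹ • S13p η x := by
  ext ⟨a, b, c⟩ ⟨d, e, f⟩
  simp only [S13, S13p, Rmat, Rp, Matrix.smul_apply, Matrix.of_apply, smul_eq_mul]
  split_ifs <;> field_simp <;> ring

lemma S23_eq (η x : ℂ) (h : Complex.sinh (x + η) ≠ 0) :
    S23 η x = (Complex.sinh (x + η))⁻¹ • S23p η x := by
  ext ⟨a, b, c⟩ ⟨d, e, f⟩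
  simp only [S23, S23p, Rmat, Rp, Matrix.smul_apply, Matrix.of_apply, smul_eq_mul]
  split_ifs <;> field_simp <;> ring

lemma YBE (η lam mu : ℂ) (h1 : Complex.sinh (lam + η) ≠ 0) (h2 : Complex.sinh (mu + η) ≠ 0)
    (h3 : Complex.sinh (lam - mu + η) ≠ 0) :
    S12 η (lam - mu) * S13 η lam * S23 η mu = S23 η mu * S13 η lam * S12 η (lam - mu) := by
  rw [S12_eq η (lam - mu) h3, S13_eq η lam h1, S23_eq η mu h2]
  simp only [Matrix.smul_mul, Matrix.mul_smul, smul_smul]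
  rw [YBEp]
  congr 1
  ring

/-- Embedding of a 3-fold operator acting on (aux1, aux2, site j). -/
noncomputable def Phi (L : ℕ) (j : Fin L) (M : Matrix T3 T3 ℂ) : Matrix (I2 L) (I2 L) ℂ :=
  Matrix.of fun p q => M (p.1, p.2.1, p.2.2 j) (q.1, q.2.1, q.2.2 j) *
    (if ∀ k, k ≠ j → p.2.2 k = q.2.2 k then 1 else 0)

lemma sum_chain {L : ℕ} (j : Fin L) (v w : Chain L) (F : Fin 2 → ℂ) :
    ∑ u : Chain L, (if ∀ k, k ≠ j → v k = u k then (1:ℂ) else 0) *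
      ((if ∀ k, k ≠ j → u k = w k then (1:ℂ) else 0) * F (u j))
    = (if ∀ k, k ≠ j → v k = w k then 1 else 0) * ∑ c : Fin 2, F c := by
  have key : ∀ u : Chain L, (if ∀ k, k ≠ j → v k = u k then (1:ℂ) else 0)
      = ∑ c : Fin 2, if u = Function.update v j c then 1 else 0 := by
    intro u
    by_cases h : ∀ k, k ≠ j → v k = u k
    · have hiff : ∀ c : Fin 2, (u = Function.update v j c) ↔ (c = u j) := by
        intro c
        constructor
        · intro hu; rw [hu]; simp
        · intro hc; funext k
          by_cases hk : k = j
          · subst hk; simp [hc]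
          · simp [Function.update_of_ne hk, (h k hk).symm]
      simp only [hiff]
      rw [if_pos h]
      simp
    · push_neg at h
      obtain ⟨k, hk, hne⟩ := h
      have hnot : ∀ c : Fin 2, u ≠ Function.update v j c := by
        intro c hu
        apply hne
        rw [hu, Function.update_of_ne hk]
      have h' : ¬ ∀ k, k ≠ j → v k = u k := by
        intro hh; exact hne (hh k hk)
      simp [h', hnot]
  calc
    ∑ u : Chain L, (if ∀ k, k ≠ j → v k = u k then (1:ℂ) else 0) *
        ((if ∀ k, k ≠ j → u k = w k then (1:ℂ) else 0) * F (u j))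
      = ∑ u : Chain L, ∑ c : Fin 2, (if u = Function.update v j c then (1:ℂ) else 0) *
          ((if ∀ k, k ≠ j → u k = w k then (1:ℂ) else 0) * F (u j)) := by
        refine Finset.sum_congr rfl fun u _ => ?_
        rw [key u, Finset.sum_mul]
    _ = ∑ c : Fin 2, ∑ u : Chain L, (if u = Function.update v j c then (1:ℂ) else 0) *
          ((if ∀ k, k ≠ j → u k = w k then (1:ℂ) else 0) * F (u j)) := Finset.sum_comm
    _ = ∑ c : Fin 2, (if ∀ k, k ≠ j → (Function.update v j c) k = w k then (1:ℂ) else 0) *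
          F ((Function.update v j c) j) := by
        refine Finset.sum_congr rfl fun c _ => ?_
        rw [Finset.sum_eq_single (Function.update v j c)]
        · simp
        · intro x _ hx; simp [hx]
        · intro hx; exact absurd (Finset.mem_univ _) hx
    _ = (if ∀ k, k ≠ j → v k = w k then 1 else 0) * ∑ c : Fin 2, F c := by
        rw [Finset.mul_sum]
        refine Finset.sum_congr rfl fun c _ => ?_
        have hcond : (∀ k, k ≠ j → (Function.update v j c) k = w k) ↔ (∀ k, k ≠ j → v k = w k) := by
          constructor
          · intro h k hk; rw [← h k hk, Function.update_of_ne hk]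
          · intro h k hk; rw [Function.update_of_ne hk]; exact h k hk
        rw [if_congr hcond rfl rfl, Function.update_self]

lemma Phi_mul {L : ℕ} (j : Fin L) (M N : Matrix T3 T3 ℂ) :
    Phi L j M * Phi L j N = Phi L j (M * N) := by
  ext ⟨a, b, v⟩ ⟨d, e, w⟩
  rw [Matrix.mul_apply, Fintype.sum_prod_type]
  simp_rw [Fintype.sum_prod_type]
  have key : ∀ p q : Fin 2, ∑ u : Chain L,
      Phi L j M (a, b, v) (p, q, u) * Phi L j N (p, q, u) (d, e, w)
      = (if ∀ k, k ≠ j → v k = w k then 1 else 0) *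
        ∑ c : Fin 2, M (a, b, v j) (p, q, c) * N (p, q, c) (d, e, w j) := by
    intro p q
    rw [← sum_chain j v w (fun c => M (a, b, v j) (p, q, c) * N (p, q, c) (d, e, w j))]
    refine Finset.sum_congr rfl fun u _ => ?_
    simp only [Phi, Matrix.of_apply]
    ring
  simp_rw [key]
  simp only [Phi, Matrix.of_apply, Matrix.mul_apply, Fintype.sum_prod_type]
  simp_rw [← Finset.mul_sum]
  rw [mul_comm]

noncomputable def R12b (L : ℕ) (η x : ℂ) : Matrix (I2 L) (I2 L) ℂ :=
  Matrix.of fun p q => Rmat η x (p.1, p.2.1) (q.1, q.2.1) * (if p.2.2 = q.2.2 then 1 else 0)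

lemma Phi_S12 {L : ℕ} (j : Fin L) (η x : ℂ) :
    Phi L j (S12 η x) = R12b L η x := by
  ext ⟨a, b, v⟩ ⟨d, e, w⟩
  simp only [Phi, S12, R12b, Matrix.of_apply]
  by_cases h : v = w
  · subst h; simp
  · rw [if_neg h]
    by_cases h1 : v j = w j
    · have h2 : ¬ ∀ k, k ≠ j → v k = w k := by
        intro hh
        exact h (funext fun k => by
          by_cases hk : k = j
          · rw [hk]; exact h1
          · exact hh k hk)
      simp [h2]
    · simp [h1]

lemma disjoint_apply₁ {L : ℕ} (η lam mu : ℂ) (j k : Fin L) (hjk : j ≠ k)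
    (a b : Fin 2) (v : Chain L) (d e : Fin 2) (w : Chain L) :
    (Phi L j (S13 η lam) * Phi L k (S23 η mu)) (a, b, v) (d, e, w)
      = Rmat η lam (a, v j) (d, w j) * Rmat η mu (b, v k) (e, w k) *
        (if ∀ m, m ≠ j → m ≠ k → v m = w m then 1 else 0) := by
  rw [Matrix.mul_apply]
  rw [Finset.sum_eq_single ((d, b, Function.update v j (w j)) : I2 L)]
  · simp only [Phi, S13, S23, Matrix.of_apply]
    have e1 : Function.update v j (w j) j = w j := Function.update_self _ _ _
    have e2 : (∀ m, m ≠ j → v m = Function.update v j (w j) m) := fun m hm =>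
      (Function.update_of_ne hm _ _).symm
    have e3 : Function.update v j (w j) k = v k := Function.update_of_ne (Ne.symm hjk) _ _
    have e4 : (∀ m, m ≠ k → Function.update v j (w j) m = w m) ↔
        (∀ m, m ≠ j → m ≠ k → v m = w m) := by
      constructor
      · intro h m hmj hmk
        rw [← h m hmk, Function.update_of_ne hmj]
      · intro h m hmk
        by_cases hmj : m = j
        · subst hmj; exact e1
        · rw [Function.update_of_ne hmj]; exact h m hmj hmk
    rw [e1, e3, if_pos e2, if_congr e4 rfl rfl]
    simp only [if_true]
    ring
  · rintro ⟨p, q, u⟩ _ hx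
    simp only [Phi, S13, S23, Matrix.of_apply]
    by_cases c1 : b = q
    case neg => simp [c1]
    by_cases c2 : (∀ m, m ≠ j → v m = u m)
    case neg => simp [c2]
    by_cases c3 : p = d
    case neg => simp [c3]
    by_cases c4 : (∀ m, m ≠ k → u m = w m)
    case neg => simp [c4]
    exfalso
    apply hx
    have hu : u = Function.update v j (w j) := by
      funext m
      by_cases hm : m = j
      · subst hm; rw [Function.update_self]; exact c4 m hjk
      · rw [Function.update_of_ne hm]; exact (c2 m hm).symm
    rw [c3, ← c1, hu]
  · intro h; exact absurd (Finset.mem_univ _) h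

lemma disjoint_apply₂ {L : ℕ} (η lam mu : ℂ) (j k : Fin L) (hjk : j ≠ k)
    (a b : Fin 2) (v : Chain L) (d e : Fin 2) (w : Chain L) :
    (Phi L k (S23 η mu) * Phi L j (S13 η lam)) (a, b, v) (d, e, w)
      = Rmat η lam (a, v j) (d, w j) * Rmat η mu (b, v k) (e, w k) *
        (if ∀ m, m ≠ j → m ≠ k → v m = w m then 1 else 0) := by
  rw [Matrix.mul_apply]
  rw [Finset.sum_eq_single ((a, e, Function.update v k (w k)) : I2 L)]
  · simp only [Phi, S13, S23, Matrix.of_apply]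
    have e1 : Function.update v k (w k) k = w k := Function.update_self _ _ _
    have e2 : (∀ m, m ≠ k → v m = Function.update v k (w k) m) := fun m hm =>
      (Function.update_of_ne hm _ _).symm
    have e3 : Function.update v k (w k) j = v j := Function.update_of_ne hjk _ _
    have e4 : (∀ m, m ≠ j → Function.update v k (w k) m = w m) ↔
        (∀ m, m ≠ j → m ≠ k → v m = w m) := by
      constructor
      · intro h m hmj hmk
        rw [← h m hmj, Function.update_of_ne hmk]
      · intro h m hmj
        by_cases hmk : m = k
        · subst hmk; exact e1
        · rw [Function.update_of_ne hmk]; exact h m hmj hmk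
    rw [e1, e3, if_pos e2, if_congr e4 rfl rfl]
    simp only [if_true]
    ring
  · rintro ⟨p, q, u⟩ _ hx
    simp only [Phi, S13, S23, Matrix.of_apply]
    by_cases c1 : a = p
    case neg => simp [c1]
    by_cases c2 : (∀ m, m ≠ k → v m = u m)
    case neg => simp [c2]
    by_cases c3 : q = e
    case neg => simp [c3]
    by_cases c4 : (∀ m, m ≠ j → u m = w m)
    case neg => simp [c4]
    exfalso
    apply hx
    have hu : u = Function.update v k (w k) := by
      funext m
      by_cases hm : m = k
      · subst hm; rw [Function.update_self]; exact c4 m (Ne.symm hjk)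
      · rw [Function.update_of_ne hm]; exact (c2 m hm).symm
    rw [← c1, c3, hu]
  · intro h; exact absurd (Finset.mem_univ _) h

lemma disjoint_commute {L : ℕ} (η lam mu : ℂ) {j k : Fin L} (hjk : j ≠ k) :
    Commute (Phi L j (S13 η lam)) (Phi L k (S23 η mu)) := by
  unfold Commute SemiconjBy
  ext ⟨a, b, v⟩ ⟨d, e, w⟩
  rw [disjoint_apply₁ η lam mu j k hjk, disjoint_apply₂ η lam mu j k hjk]

noncomputable def emb1 (L : ℕ) (M : Matrix (Fin 2 × Chain L) (Fin 2 × Chain L) ℂ) :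
    Matrix (I2 L) (I2 L) ℂ :=
  Matrix.of fun p q => M (p.1, p.2.2) (q.1, q.2.2) * (if p.2.1 = q.2.1 then 1 else 0)

noncomputable def emb2 (L : ℕ) (M : Matrix (Fin 2 × Chain L) (Fin 2 × Chain L) ℂ) :
    Matrix (I2 L) (I2 L) ℂ :=
  Matrix.of fun p q => M (p.2.1, p.2.2) (q.2.1, q.2.2) * (if p.1 = q.1 then 1 else 0)

lemma delta_sum (b e : Fin 2) :
    (∑ q : Fin 2, (if b = q then (1:ℂ) else 0) * (if q = e then 1 else 0)) =
      if b = e then 1 else 0 := by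
  fin_cases b <;> fin_cases e <;> simp [Fin.sum_univ_two]

lemma emb1_mul {L : ℕ} (M N : Matrix (Fin 2 × Chain L) (Fin 2 × Chain L) ℂ) :
    emb1 L (M * N) = emb1 L M * emb1 L N := by
  ext ⟨a, b, v⟩ ⟨d, e, w⟩
  rw [Matrix.mul_apply, Fintype.sum_prod_type]
  simp_rw [Fintype.sum_prod_type]
  have key : ∀ p : Fin 2, ∀ u : Chain L,
      (∑ q : Fin 2, emb1 L M (a, b, v) (p, q, u) * emb1 L N (p, q, u) (d, e, w))
      = (M (a, v) (p, u) * N (p, u) (d, w)) * (if b = e then 1 else 0) := by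
    intro p u
    calc (∑ q : Fin 2, emb1 L M (a, b, v) (p, q, u) * emb1 L N (p, q, u) (d, e, w))
        = ∑ q : Fin 2, (M (a, v) (p, u) * N (p, u) (d, w)) *
            ((if b = q then (1:ℂ) else 0) * (if q = e then 1 else 0)) := by
          refine Finset.sum_congr rfl fun q _ => ?_
          simp only [emb1, Matrix.of_apply]
          ring
      _ = (M (a, v) (p, u) * N (p, u) (d, w)) * (if b = e then 1 else 0) := by
          rw [← Finset.mul_sum, delta_sum]
  have swap : ∀ p : Fin 2,
      (∑ q : Fin 2, ∑ u : Chain L, emb1 L M (a, b, v) (p, q, u) * emb1 L N (p, q, u) (d, e, w))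
      = ∑ u : Chain L, (M (a, v) (p, u) * N (p, u) (d, w)) * (if b = e then 1 else 0) := by
    intro p
    rw [Finset.sum_comm]
    exact Finset.sum_congr rfl fun u _ => key p u
  simp_rw [swap]
  simp only [emb1, Matrix.of_apply, Matrix.mul_apply, Fintype.sum_prod_type]
  simp_rw [Finset.sum_mul]

lemma emb2_mul {L : ℕ} (M N : Matrix (Fin 2 × Chain L) (Fin 2 × Chain L) ℂ) :
    emb2 L (M * N) = emb2 L M * emb2 L N := by
  ext ⟨a, b, v⟩ ⟨d, e, w⟩
  rw [Matrix.mul_apply, Fintype.sum_prod_type]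
  simp_rw [Fintype.sum_prod_type]
  have key : ∀ q : Fin 2, ∀ u : Chain L,
      (∑ p : Fin 2, ∑ u' : Chain L, (0:ℂ)) = 0 := by intro q u; simp
  -- direct computation
  have key2 : ∀ p : Fin 2,
      (∑ q : Fin 2, ∑ u : Chain L, emb2 L M (a, b, v) (p, q, u) * emb2 L N (p, q, u) (d, e, w))
      = (if a = p then 1 else 0) * ∑ q : Fin 2, ∑ u : Chain L,
          (M (b, v) (q, u) * N (q, u) (e, w)) * (if p = d then 1 else 0) := by
    intro p
    rw [Finset.mul_sum]
    refine Finset.sum_congr rfl fun q _ => ?_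
    rw [Finset.mul_sum]
    refine Finset.sum_congr rfl fun u _ => ?_
    simp only [emb2, Matrix.of_apply]
    ring
  simp_rw [key2]
  simp only [emb2, Matrix.of_apply, Matrix.mul_apply, Fintype.sum_prod_type]
  rw [Fin.sum_univ_two, Fin.sum_univ_two]
  by_cases had : a = d
  · subst had
    by_cases ha : a = 0
    · subst ha
      simp only [if_pos rfl, one_ne_zero, if_neg, if_true]
      simp [← Finset.sum_mul]
    · have ha1 : a = 1 := by omega
      subst ha1
      simp only [if_pos rfl, one_ne_zero, if_neg, if_true]
      simp [← Finset.sum_mul]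
  · by_cases ha : a = 0 <;> by_cases hd : d = 0
    · exact absurd (ha.trans hd.symm) had
    · have hd1 : d = 1 := by omega
      subst ha; subst hd1
      simp
    · have ha1 : a = 1 := by omega
      subst ha1; subst hd
      simp
    · have ha1 : a = 1 := by omega
      have hd1 : d = 1 := by omega
      exact absurd (ha1.trans hd1.symm) had

lemma emb1_one {L : ℕ} : emb1 L 1 = 1 := by
  ext ⟨a, b, v⟩ ⟨d, e, w⟩
  simp only [emb1, Matrix.of_apply, Matrix.one_apply, Prod.ext_iff]
  by_cases h1 : a = d <;> by_cases h2 : b = e <;> by_cases h3 : v = w <;>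
    simp [h1, h2, h3, Prod.ext_iff]

lemma emb2_one {L : ℕ} : emb2 L 1 = 1 := by
  ext ⟨a, b, v⟩ ⟨d, e, w⟩
  simp only [emb2, Matrix.of_apply, Matrix.one_apply, Prod.ext_iff]
  by_cases h1 : a = d <;> by_cases h2 : b = e <;> by_cases h3 : v = w <;>
    simp [h1, h2, h3, Prod.ext_iff]

lemma emb1_listProd {L : ℕ} (l : List (Matrix (Fin 2 × Chain L) (Fin 2 × Chain L) ℂ)) :
    emb1 L l.prod = (l.map (emb1 L)).prod := by
  induction l with
  | nil => simpa using emb1_one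
  | cons x xs ih => simp [List.prod_cons, emb1_mul, ih]

lemma emb2_listProd {L : ℕ} (l : List (Matrix (Fin 2 × Chain L) (Fin 2 × Chain L) ℂ)) :
    emb2 L l.prod = (l.map (emb2 L)).prod := by
  induction l with
  | nil => simpa using emb2_one
  | cons x xs ih => simp [List.prod_cons, emb2_mul, ih]

lemma emb1_Raux {L : ℕ} (η lam : ℂ) (j : Fin L) :
    emb1 L (Raux L η lam j) = Phi L j (S13 η lam) := by
  ext ⟨a, b, v⟩ ⟨d, e, w⟩
  simp only [emb1, Raux, Phi, S13, Matrix.of_apply]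
  ring

lemma emb2_Raux {L : ℕ} (η lam : ℂ) (j : Fin L) :
    emb2 L (Raux L η lam j) = Phi L j (S23 η lam) := by
  ext ⟨a, b, v⟩ ⟨d, e, w⟩
  simp only [emb2, Raux, Phi, S23, Matrix.of_apply]
  ring

lemma emb1_monodromy {L : ℕ} (η lam : ℂ) :
    emb1 L (monodromy L η lam) = (List.ofFn fun j : Fin L => Phi L j (S13 η lam)).reverse.prod := by
  rw [monodromy, emb1_listProd, List.map_reverse, List.map_ofFn]
  exact congrArg (fun l : List _ => l.reverse.prod)
    (congrArg List.ofFn (funext fun j => emb1_Raux η lam j))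

lemma emb2_monodromy {L : ℕ} (η lam : ℂ) :
    emb2 L (monodromy L η lam) = (List.ofFn fun j : Fin L => Phi L j (S23 η lam)).reverse.prod := by
  rw [monodromy, emb2_listProd, List.map_reverse, List.map_ofFn]
  exact congrArg (fun l : List _ => l.reverse.prod)
    (congrArg List.ofFn (funext fun j => emb2_Raux η lam j))

lemma prod_ofFn_rev_mul {S : Type*} [Monoid S] :
    ∀ (n : ℕ) (f g : Fin n → S), (∀ i j, i ≠ j → Commute (f i) (g j)) →
    (List.ofFn f).reverse.prod * (List.ofFn g).reverse.prod
      = (List.ofFn fun i => f i * g i).reverse.prod := by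
  intro n
  induction n with
  | zero => intro f g _; simp
  | succ n ih =>
    intro f g h
    rw [List.ofFn_succ (f := f), List.ofFn_succ (f := g),
      List.ofFn_succ (f := fun i => f i * g i)]
    simp only [List.reverse_cons, List.prod_append, List.prod_cons, List.prod_nil, mul_one]
    set A := (List.ofFn fun i : Fin n => f i.succ).reverse.prod with hA
    set B := (List.ofFn fun i : Fin n => g i.succ).reverse.prod with hB
    have hcomm : Commute (f 0) B := by
      apply Commute.list_prod_right
      intro x hx
      rw [List.mem_reverse, List.mem_ofFn] at hx
      obtain ⟨i, rfl⟩ := hx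
      exact h 0 i.succ (Ne.symm (Fin.succ_ne_zero i))
    have step : f 0 * (B * g 0) = B * (f 0 * g 0) := by
      rw [← mul_assoc, hcomm.eq, mul_assoc]
    rw [mul_assoc, step, ← mul_assoc]
    rw [ih (fun i => f i.succ) (fun i => g i.succ)
      (fun i j hij => h i.succ j.succ (fun hc => hij (Fin.succ_injective _ hc)))]

lemma rtt_list {S : Type*} [Monoid S] :
    ∀ (n : ℕ) (R : S) (f g : Fin n → S), (∀ i, R * f i = g i * R) →
    R * (List.ofFn f).reverse.prod = (List.ofFn g).reverse.prod * R := by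
  intro n
  induction n with
  | zero => intro R f g _; simp
  | succ n ih =>
    intro R f g h
    rw [List.ofFn_succ (f := f), List.ofFn_succ (f := g)]
    simp only [List.reverse_cons, List.prod_append, List.prod_cons, List.prod_nil, mul_one]
    rw [← mul_assoc, ih R (fun i => f i.succ) (fun i => g i.succ) (fun i => h i.succ)]
    rw [mul_assoc, h 0, ← mul_assoc]

lemma R12b_row {L : ℕ} (η x : ℂ) (v : Chain L) (X : Matrix (I2 L) (I2 L) ℂ) (Q : I2 L) :
    (R12b L η x * X) (0, 0, v) Q = X (0, 0, v) Q := by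
  rw [Matrix.mul_apply, Fintype.sum_prod_type]
  simp_rw [Fintype.sum_prod_type]
  rw [Fin.sum_univ_two]
  simp_rw [Fin.sum_univ_two]
  simp only [R12b, Rmat, Matrix.of_apply, Prod.mk.injEq]
  norm_num

lemma R12b_col {L : ℕ} (η x : ℂ) (w : Chain L) (X : Matrix (I2 L) (I2 L) ℂ) (P : I2 L) :
    (X * R12b L η x) P (1, 1, w) = X P (1, 1, w) := by
  rw [Matrix.mul_apply, Fintype.sum_prod_type]
  simp_rw [Fintype.sum_prod_type]
  rw [Fin.sum_univ_two]
  simp_rw [Fin.sum_univ_two]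
  simp only [R12b, Rmat, Matrix.of_apply, Prod.mk.injEq]
  norm_num

end BCaux


open BCaux in
/-- The creation operators of the algebraic Bethe ansatz commute:
`B(λ) B(μ) = B(μ) B(λ)` on `(ℂ²)^{⊗L}`. -/
theorem B_commute (L : ℕ) (hL : 1 ≤ L) (η lam mu : ℂ)
    (h1 : Complex.sinh (lam + η) ≠ 0) (h2 : Complex.sinh (mu + η) ≠ 0)
    (h3 : Complex.sinh (lam - mu + η) ≠ 0) :
    Bop L η lam * Bop L η mu = Bop L η mu * Bop L η lam := by
  classical
  have hsite : ∀ j : Fin L,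
      R12b L η (lam - mu) * (Phi L j (S13 η lam) * Phi L j (S23 η mu))
        = (Phi L j (S23 η mu) * Phi L j (S13 η lam)) * R12b L η (lam - mu) := by
    intro j
    calc R12b L η (lam - mu) * (Phi L j (S13 η lam) * Phi L j (S23 η mu))
        = Phi L j (S12 η (lam - mu)) * Phi L j (S13 η lam * S23 η mu) := by
          rw [Phi_S12, Phi_mul]
      _ = Phi L j (S12 η (lam - mu) * (S13 η lam * S23 η mu)) := Phi_mul _ _ _
      _ = Phi L j (S23 η mu * S13 η lam * S12 η (lam - mu)) := by
          rw [← mul_assoc, YBE η lam mu h1 h2 h3]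
      _ = Phi L j (S23 η mu * S13 η lam) * Phi L j (S12 η (lam - mu)) := (Phi_mul _ _ _).symm
      _ = (Phi L j (S23 η mu) * Phi L j (S13 η lam)) * R12b L η (lam - mu) := by
          rw [← Phi_mul, Phi_S12]
  have hinter1 : emb1 L (monodromy L η lam) * emb2 L (monodromy L η mu)
      = (List.ofFn fun j : Fin L => Phi L j (S13 η lam) * Phi L j (S23 η mu)).reverse.prod := by
    rw [emb1_monodromy, emb2_monodromy]
    exact prod_ofFn_rev_mul L _ _ (fun i j hij => disjoint_commute η lam mu hij)
  have hinter2 : emb2 L (monodromy L η mu) * emb1 L (monodromy L η lam)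
      = (List.ofFn fun j : Fin L => Phi L j (S23 η mu) * Phi L j (S13 η lam)).reverse.prod := by
    rw [emb1_monodromy, emb2_monodromy]
    exact prod_ofFn_rev_mul L _ _
      (fun i j hij => (disjoint_commute η lam mu (Ne.symm hij)).symm)
  have hRTT : R12b L η (lam - mu) * (emb1 L (monodromy L η lam) * emb2 L (monodromy L η mu))
      = (emb2 L (monodromy L η mu) * emb1 L (monodromy L η lam)) * R12b L η (lam - mu) := by
    rw [hinter1, hinter2]
    exact rtt_list L _ _ _ hsite
  ext v w
  have eL : (Bop L η lam * Bop L η mu) v w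
      = (emb1 L (monodromy L η lam) * emb2 L (monodromy L η mu)) (0, 0, v) (1, 1, w) := by
    rw [Matrix.mul_apply, Matrix.mul_apply, Fintype.sum_prod_type]
    simp_rw [Fintype.sum_prod_type]
    rw [Fin.sum_univ_two]
    simp_rw [Fin.sum_univ_two]
    simp [emb1, emb2, Bop, show (1 : Fin 2) ≠ 0 by decide, show (0 : Fin 2) ≠ 1 by decide]
  have eR : (Bop L η mu * Bop L η lam) v w
      = (emb2 L (monodromy L η mu) * emb1 L (monodromy L η lam)) (0, 0, v) (1, 1, w) := by
    rw [Matrix.mul_apply, Matrix.mul_apply, Fintype.sum_prod_type]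
    simp_rw [Fintype.sum_prod_type]
    rw [Fin.sum_univ_two]
    simp_rw [Fin.sum_univ_two]
    simp [emb1, emb2, Bop, show (1 : Fin 2) ≠ 0 by decide, show (0 : Fin 2) ≠ 1 by decide]
  rw [eL, eR]
  calc (emb1 L (monodromy L η lam) * emb2 L (monodromy L η mu)) (0, 0, v) (1, 1, w)
      = (R12b L η (lam - mu) *
          (emb1 L (monodromy L η lam) * emb2 L (monodromy L η mu))) (0, 0, v) (1, 1, w) :=
        (R12b_row η (lam - mu) v _ _).symm
    _ = ((emb2 L (monodromy L η mu) * emb1 L (monodromy L η lam)) *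
          R12b L η (lam - mu)) (0, 0, v) (1, 1, w) := by rw [hRTT]
    _ = (emb2 L (monodromy L η mu) * emb1 L (monodromy L η lam)) (0, 0, v) (1, 1, w) :=
        R12b_col η (lam - mu) w _ _
end

section
/- Let L ≥ 1 and η ∈ ℂ with sinh η ≠ 0. Then for every site j with 1 ≤ j ≤ L, the solution of the quantum inverse scattering problem for the local spin operator holds: σ_j^z = T(0)^{j−1} · (A(0) − D(0)) · T(0)^{−j}, as operators on (ℂ²)^{⊗L}. (Here A(0) − D(0) = Tr_a[σ_a^z 𝒯_a(0)], and T(0) is invertible.) -/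
open Complex Matrix

/-- The Pauli matrices `σ^x, σ^y, σ^z` (indexed by `0, 1, 2` ↔ `x, y, z`). -/
noncomputable def pauli : Fin 3 → Matrix (Fin 2) (Fin 2) ℂ :=
  ![!![0, 1; 1, 0], !![0, -Complex.I; Complex.I, 0], !![1, 0; 0, -1]]

/-- `σ_j`: the one-site operator `m` acting on the `j`-th tensor factor of `(ℂ²)^{⊗L}`
and as the identity on all other factors. -/
noncomputable def siteOp (L : ℕ) (m : Matrix (Fin 2) (Fin 2) ℂ) (j : Fin L) :
    Matrix (Chain L) (Chain L) ℂ :=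
  Matrix.of fun v w => m (v j) (w j) * (if ∀ k, k ≠ j → v k = w k then 1 else 0)

namespace QISPaux

/-- The permutation of `ℂ²_a ⊗ (ℂ²)^{⊗L}` swapping the auxiliary space with site `j`. -/
def swapE (L : ℕ) (j : Fin L) : Equiv.Perm (Fin 2 × Chain L) where
  toFun p := (p.2 j, Function.update p.2 j p.1)
  invFun p := (p.2 j, Function.update p.2 j p.1)
  left_inv p := by
    obtain ⟨a, v⟩ := p
    simp [Function.update_idem]
  right_inv p := by
    obtain ⟨a, v⟩ := p
    simp [Function.update_idem]

lemma swapE_apply (L : ℕ) (j : Fin L) (a : Fin 2) (v : Chain L) :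
    swapE L j (a, v) = (v j, Function.update v j a) := rfl

lemma Rmat_zero (η : ℂ) (hη : Complex.sinh η ≠ 0) (p q : Fin 2 × Fin 2) :
    Rmat η 0 p q = if q = (p.2, p.1) then 1 else 0 := by
  rcases p with ⟨a, b⟩
  rcases q with ⟨c, d⟩
  fin_cases a <;> fin_cases b <;> fin_cases c <;> fin_cases d <;>
    simp [Rmat, Complex.sinh_zero, div_self hη, Prod.ext_iff]

lemma Raux_zero (L : ℕ) (η : ℂ) (hη : Complex.sinh η ≠ 0) (j : Fin L) :
    Raux L η 0 j = ((swapE L j).toPEquiv.toMatrix : Matrix (Fin 2 × Chain L) (Fin 2 × Chain L) ℂ) := by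
  ext p q
  rcases p with ⟨a, v⟩
  rcases q with ⟨b, w⟩
  rw [Raux, Matrix.of_apply, Rmat_zero η hη, PEquiv.toMatrix_apply, Equiv.toPEquiv_apply,
    swapE_apply]
  simp only [Option.mem_def, Option.some.injEq]
  have hiff : (((b : Fin 2), w j) = ((v j : Fin 2), a) ∧ ∀ k, k ≠ j → v k = w k) ↔
      ((v j, Function.update v j a) = (b, w)) := by
    constructor
    · rintro ⟨h1, h2⟩
      obtain ⟨hb, hwj⟩ := Prod.mk.injEq .. ▸ h1
      refine (Prod.ext hb ?_).symm
      show w = Function.update v j a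
      funext k
      by_cases hk : k = j
      · subst hk; rw [Function.update_self]; exact hwj
      · rw [Function.update_of_ne hk]; exact (h2 k hk).symm
    · intro h
      obtain ⟨hb, hw⟩ := Prod.mk.injEq .. ▸ h.symm
      subst hb; subst hw
      refine ⟨by simp, fun k hk => by rw [Function.update_of_ne hk]⟩
  by_cases hc : (((b : Fin 2), w j) = ((v j : Fin 2), a) ∧ ∀ k, k ≠ j → v k = w k)
  · rw [if_pos hc.1, if_pos hc.2, if_pos (hiff.mp hc), one_mul]
  · rw [if_neg fun h => hc (hiff.mpr h)]
    by_cases h1 : ((b : Fin 2), w j) = ((v j : Fin 2), a)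
    · have h2 : ¬ ∀ k, k ≠ j → v k = w k := fun h2 => hc ⟨h1, h2⟩
      rw [if_pos h1, if_neg h2, mul_zero]
    · rw [if_neg h1, zero_mul]

lemma prod_perm_matrix {α : Type*} [Fintype α] [DecidableEq α] :
    ∀ l : List (Equiv.Perm α),
      ((l.map fun e => (e.toPEquiv.toMatrix : Matrix α α ℂ)).reverse).prod
        = (l.prod).toPEquiv.toMatrix
  | [] => by
    simp only [List.map_nil, List.reverse_nil, List.prod_nil]
    rw [show (1 : Equiv.Perm α) = Equiv.refl α from rfl, Equiv.toPEquiv_refl,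
      PEquiv.toMatrix_refl]
  | e :: t => by
    rw [List.map_cons, List.reverse_cons, List.prod_append, List.prod_cons, List.prod_nil,
      mul_one, prod_perm_matrix t, List.prod_cons, ← PEquiv.toMatrix_trans,
      ← Equiv.toPEquiv_trans]
    rfl

lemma monodromy_zero (L : ℕ) (η : ℂ) (hη : Complex.sinh η ≠ 0) :
    monodromy L η 0
      = (((List.ofFn fun j : Fin L => swapE L j).prod).toPEquiv.toMatrix :
          Matrix (Fin 2 × Chain L) (Fin 2 × Chain L) ℂ) := by
  rw [monodromy]
  have h : (List.ofFn fun j : Fin L => Raux L η 0 j)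
      = (List.ofFn fun j : Fin L => swapE L j).map fun e => e.toPEquiv.toMatrix := by
    rw [List.map_ofFn]
    exact congrArg _ (funext fun j => Raux_zero L η hη j)
  rw [h, prod_perm_matrix]

lemma take_prod_apply (L : ℕ) [NeZero L] :
    ∀ m (hm : m ≤ L) (a : Fin 2) (v : Chain L),
      ((((List.finRange L).take m).map (swapE L)).prod) (a, v)
        = (if 0 < m then v 0 else a,
           fun k : Fin L => if h : (k : ℕ) + 1 < m then v ⟨(k : ℕ) + 1, h.trans_le hm⟩
                    else if (k : ℕ) + 1 = m then a else v k) := by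
  intro m
  induction m with
  | zero =>
    intro hm a v
    simp only [List.take_zero, List.map_nil, List.prod_nil, Equiv.Perm.coe_one, id_eq]
    refine Prod.ext (by simp) ?_
    show v = _
    funext k
    simp
  | succ m ih =>
    intro hm a v
    have hmL : m < L := lt_of_lt_of_le (Nat.lt_succ_self m) hm
    have hmle : m ≤ L := le_of_lt hmL
    have hget : (List.finRange L)[m]? = some ⟨m, hmL⟩ := by
      rw [List.getElem?_eq_getElem (by simpa using hmL)]
      simp [List.getElem_finRange]
    rw [List.take_succ, hget]
    simp only [Option.toList_some, List.map_append, List.map_cons, List.map_nil,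
      List.prod_append, List.prod_cons, List.prod_nil, mul_one]
    rw [Equiv.Perm.mul_apply, swapE_apply, ih hmle]
    refine Prod.ext ?_ ?_ <;> dsimp only
    · rw [if_pos (Nat.succ_pos m)]
      by_cases hm0 : 0 < m
      · rw [if_pos hm0, Function.update_of_ne (Fin.ne_of_val_ne (by simpa using hm0.ne))]
      · have hm0' : m = 0 := by omega
        subst hm0'
        rw [if_neg hm0]
        congr 1
    · funext k
      by_cases h1 : (k : ℕ) + 1 < m
      · rw [dif_pos h1, dif_pos (by omega : (k : ℕ) + 1 < m + 1),
          Function.update_of_ne (Fin.ne_of_val_ne (by simp; omega))]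
      · by_cases h2 : (k : ℕ) + 1 = m
        · rw [dif_neg h1, if_pos h2, dif_pos (by omega : (k : ℕ) + 1 < m + 1)]
          congr 1
          exact Fin.ext (by simp [h2])
        · by_cases h3 : (k : ℕ) = m
          · rw [dif_neg h1, if_neg h2, dif_neg (by omega : ¬ ((k : ℕ) + 1 < m + 1)),
              if_pos (by omega : (k : ℕ) + 1 = m + 1)]
            have hk : k = ⟨m, hmL⟩ := Fin.ext (by simpa using h3)
            rw [hk, Function.update_self]
          · rw [dif_neg h1, if_neg h2, dif_neg (by omega : ¬ ((k : ℕ) + 1 < m + 1)),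
              if_neg (by omega : ¬ ((k : ℕ) + 1 = m + 1)),
              Function.update_of_ne (Fin.ne_of_val_ne (by simpa using h3))]

lemma ofFn_prod_apply (L : ℕ) [NeZero L] (a : Fin 2) (v : Chain L) :
    ((List.ofFn fun j : Fin L => swapE L j).prod) (a, v)
      = (v 0, fun k : Fin L => if h : (k : ℕ) + 1 < L then v ⟨(k : ℕ) + 1, h⟩ else a) := by
  have htake : (List.finRange L).take L = List.finRange L :=
    List.take_of_length_le (by simp)
  have h := take_prod_apply L L le_rfl a v
  rw [htake] at h
  rw [List.ofFn_eq_map, h]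
  refine Prod.ext ?_ ?_ <;> dsimp only
  · rw [if_pos (Nat.pos_of_ne_zero (NeZero.ne L))]
  · funext k
    by_cases hk : (k : ℕ) + 1 < L
    · rw [dif_pos hk, dif_pos hk]
    · rw [dif_neg hk, dif_neg hk, if_pos (by have := k.isLt; omega)]

/-- The cyclic shift on chains: `(SE v) k = v (k+1)`. -/
def SE (L : ℕ) : Equiv.Perm (Chain L) :=
  Equiv.arrowCongr (finRotate L).symm (Equiv.refl (Fin 2))

lemma SE_apply (L : ℕ) [NeZero L] (v : Chain L) (k : Fin L) :
    SE L v k = if h : (k : ℕ) + 1 < L then v ⟨(k : ℕ) + 1, h⟩ else v 0 := by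
  obtain ⟨n, rfl⟩ := Nat.exists_eq_succ_of_ne_zero (NeZero.ne L)
  have hv : SE (n + 1) v k = v (finRotate (n + 1) k) := rfl
  rw [hv, finRotate_succ_apply]
  by_cases h : (k : ℕ) + 1 < n + 1
  · rw [dif_pos h]
    congr 1
    refine Fin.ext ?_
    rw [Fin.val_add_one_of_lt (by rw [Fin.lt_def, Fin.val_last]; omega)]
  · rw [dif_neg h]
    have hk : k = Fin.last n := Fin.ext (by have := k.isLt; simp; omega)
    rw [hk, Fin.last_add_one]

lemma piE_snd (L : ℕ) [NeZero L] (v : Chain L) :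
    (fun k : Fin L => if h : (k : ℕ) + 1 < L then v ⟨(k : ℕ) + 1, h⟩ else v 0) = SE L v := by
  funext k
  rw [SE_apply]

lemma hg_lemma (L : ℕ) [NeZero L] (v : Chain L) :
    ∀ a : Fin 2, a = v 0 →
      (fun k : Fin L => if h : (k : ℕ) + 1 < L then v ⟨(k : ℕ) + 1, h⟩ else a) = SE L v := by
  rintro a rfl
  exact piE_snd L v

lemma hmono (L : ℕ) [NeZero L] (η : ℂ) (hη : Complex.sinh η ≠ 0) (a b : Fin 2)
    (v w : Chain L) :
    monodromy L η 0 (a, v) (b, w)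
      = if (b = v 0 ∧ w = fun k : Fin L => if h : (k : ℕ) + 1 < L then v ⟨(k : ℕ) + 1, h⟩ else a)
        then 1 else 0 := by
  rw [monodromy_zero L η hη, PEquiv.toMatrix_apply, Equiv.toPEquiv_apply, ofFn_prod_apply]
  simp only [Option.mem_def, Option.some.injEq, Prod.mk.injEq]
  exact if_congr (and_congr eq_comm eq_comm) rfl rfl

lemma transfer_zero (L : ℕ) [NeZero L] (η : ℂ) (hη : Complex.sinh η ≠ 0) :
    transfer L η 0 = ((SE L).toPEquiv.toMatrix : Matrix (Chain L) (Chain L) ℂ) := by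
  ext v w
  rw [transfer, Matrix.of_apply]
  have hterm : ∀ a : Fin 2, monodromy L η 0 (a, v) (a, w)
      = if a = v 0 then (if w = SE L v then (1 : ℂ) else 0) else 0 := by
    intro a
    rw [hmono L η hη]
    by_cases ha : a = v 0
    · subst ha
      rw [hg_lemma L v (v 0) rfl]
      simp
    · rw [if_neg (fun h => ha h.1), if_neg ha]
  rw [Finset.sum_congr rfl fun a _ => hterm a,
    Finset.sum_ite_eq' Finset.univ (v 0) fun _ => if w = SE L v then (1 : ℂ) else 0,
    if_pos (Finset.mem_univ _), PEquiv.toMatrix_apply, Equiv.toPEquiv_apply]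
  simp only [Option.mem_def, Option.some.injEq]
  exact if_congr eq_comm rfl rfl

lemma perm_one_matrix {α : Type*} [Fintype α] [DecidableEq α] :
    ((1 : Equiv.Perm α).toPEquiv.toMatrix : Matrix α α ℂ) = 1 := by
  rw [show (1 : Equiv.Perm α) = Equiv.refl α from rfl, Equiv.toPEquiv_refl, PEquiv.toMatrix_refl]

lemma perm_pow_matrix {α : Type*} [Fintype α] [DecidableEq α] (f : Equiv.Perm α) (n : ℕ) :
    ((f.toPEquiv.toMatrix : Matrix α α ℂ)) ^ n = ((f ^ n).toPEquiv.toMatrix) := by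
  induction n with
  | zero => rw [pow_zero, pow_zero, perm_one_matrix]
  | succ n ih =>
    rw [pow_succ, ih, ← PEquiv.toMatrix_trans, ← Equiv.toPEquiv_trans]
    have h : (f ^ n).trans f = f ^ (n + 1) := by rw [pow_succ']; rfl
    rw [h]

lemma rot_pow_zero (L : ℕ) [NeZero L] :
    ∀ m, ∀ hm : m < L, ((finRotate L) ^ m) (0 : Fin L) = ⟨m, hm⟩ := by
  intro m
  induction m with
  | zero =>
    intro hm
    rw [pow_zero]
    exact Fin.ext (by simp)
  | succ m ih =>
    intro hm
    rw [pow_succ', Equiv.Perm.mul_apply, ih (by omega)]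
    obtain ⟨n, rfl⟩ := Nat.exists_eq_succ_of_ne_zero (NeZero.ne L)
    rw [finRotate_succ_apply]
    refine Fin.ext ?_
    rw [Fin.val_add_one_of_lt (by rw [Fin.lt_def, Fin.val_last]; simpa using (by omega : m < n))]

lemma SE_pow_apply (L : ℕ) [NeZero L] (n : ℕ) (v : Chain L) :
    ∀ k : Fin L, ((SE L ^ n) v) k = v (((finRotate L) ^ n) k) := by
  induction n with
  | zero => intro k; rw [pow_zero, pow_zero]; rfl
  | succ n ih =>
    intro k
    rw [pow_succ', Equiv.Perm.mul_apply]
    have hse : ∀ u : Chain L, SE L u k = u (finRotate L k) := fun u => rfl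
    rw [hse, ih (finRotate L k), ← Equiv.Perm.mul_apply, ← pow_succ]

lemma pauli_offdiag (x y : Fin 2) (hxy : x ≠ y) : pauli 2 x y = 0 := by
  fin_cases x <;> fin_cases y
  · exact absurd rfl hxy
  · simp [pauli]
  · simp [pauli]
  · exact absurd rfl hxy

lemma AD_entry (L : ℕ) [NeZero L] (η : ℂ) (hη : Complex.sinh η ≠ 0) (v w : Chain L) :
    (Aop L η 0 - Dop L η 0) v w
      = (if w = SE L v then (1 : ℂ) else 0) * pauli 2 (v 0) (v 0) := by
  have e0 : monodromy L η 0 (0, v) (0, w)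
      = if v 0 = 0 then (if w = SE L v then (1 : ℂ) else 0) else 0 := by
    rw [hmono L η hη]
    by_cases h0 : v 0 = 0
    · rw [if_pos h0, hg_lemma L v 0 h0.symm]
      simp [h0]
    · rw [if_neg h0, if_neg (fun h => h0 h.1.symm)]
  have e1 : monodromy L η 0 (1, v) (1, w)
      = if v 0 = 1 then (if w = SE L v then (1 : ℂ) else 0) else 0 := by
    rw [hmono L η hη]
    by_cases h1 : v 0 = 1
    · rw [if_pos h1, hg_lemma L v 1 h1.symm]
      simp [h1]
    · rw [if_neg h1, if_neg (fun h => h1 h.1.symm)]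
  rw [Matrix.sub_apply]
  show monodromy L η 0 (0, v) (0, w) - monodromy L η 0 (1, v) (1, w) = _
  rw [e0, e1]
  by_cases h0 : v 0 = 0
  · rw [if_pos h0, if_neg (show ¬ (v 0 = 1) by rw [h0]; decide), sub_zero]
    have hp : pauli 2 (v 0) (v 0) = 1 := by rw [h0]; simp [pauli]
    rw [hp, mul_one]
  · have h1 : v 0 = 1 := by
      have hlt := (v 0).isLt
      have hne : ((v 0 : Fin 2) : ℕ) ≠ 0 := fun h => h0 (Fin.ext (by simpa using h))
      exact Fin.ext (by rw [Fin.val_one]; omega)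
    rw [if_neg h0, if_pos h1, zero_sub]
    have hp : pauli 2 (v 0) (v 0) = -1 := by rw [h1]; simp [pauli]
    rw [hp]
    by_cases hw : w = SE L v
    · rw [if_pos hw]; ring
    · rw [if_neg hw]; ring

end QISPaux

open QISPaux

/-- Solution of the quantum inverse scattering problem for the local spin operator:
`T(0)` is invertible, `A(0) − D(0) = Tr_a[σ_a^z 𝒯_a(0)]`, and for every site `j`
(`0`-indexed, so NL site `j+1`), `σ_{j+1}^z = T(0)^j (A(0) − D(0)) T(0)^{−(j+1)}`. -/
theorem quantum_inverse_scattering (L : ℕ) [NeZero L] (η : ℂ)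
    (hη : Complex.sinh η ≠ 0) :
    IsUnit (transfer L η 0) ∧
      (Aop L η 0 - Dop L η 0 =
        Matrix.of fun v w => ∑ a : Fin 2, pauli 2 a a * monodromy L η 0 (a, v) (a, w)) ∧
      ∀ j : Fin L,
        siteOp L (pauli 2) j =
          transfer L η 0 ^ (j : ℕ) * (Aop L η 0 - Dop L η 0) *
            ((transfer L η 0)⁻¹) ^ ((j : ℕ) + 1) := by
  have hT := transfer_zero L η hη
  have hTr : transfer L η 0 * ((SE L).symm.toPEquiv.toMatrix : Matrix (Chain L) (Chain L) ℂ)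
      = 1 := by
    rw [hT, ← PEquiv.toMatrix_trans, ← Equiv.toPEquiv_trans, Equiv.self_trans_symm,
      Equiv.toPEquiv_refl, PEquiv.toMatrix_refl]
  have hTl : ((SE L).symm.toPEquiv.toMatrix : Matrix (Chain L) (Chain L) ℂ) * transfer L η 0
      = 1 := by
    rw [hT, ← PEquiv.toMatrix_trans, ← Equiv.toPEquiv_trans, Equiv.symm_trans_self,
      Equiv.toPEquiv_refl, PEquiv.toMatrix_refl]
  have hTinv : (transfer L η 0)⁻¹ = ((SE L).symm.toPEquiv.toMatrix : Matrix (Chain L) (Chain L) ℂ) :=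
    Matrix.inv_eq_right_inv hTr
  refine ⟨⟨⟨_, _, hTr, hTl⟩, rfl⟩, ?_, ?_⟩
  · ext v w
    simp only [Matrix.sub_apply, Aop, Dop, Matrix.of_apply, Fin.sum_univ_two]
    have hp0 : pauli 2 (0 : Fin 2) 0 = 1 := by simp [pauli]
    have hp1 : pauli 2 (1 : Fin 2) 1 = -1 := by simp [pauli]
    rw [hp0, hp1]
    ring
  · intro j
    have hTpow : transfer L η 0 ^ (j : ℕ)
        = (((SE L) ^ (j : ℕ)).toPEquiv.toMatrix : Matrix (Chain L) (Chain L) ℂ) := by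
      rw [hT, perm_pow_matrix]
    have hsympow : ((SE L).symm) ^ ((j : ℕ) + 1) = ((SE L) ^ ((j : ℕ) + 1)).symm := by
      rw [← Equiv.Perm.inv_def, ← Equiv.Perm.inv_def, inv_pow]
    have hTinvpow : ((transfer L η 0)⁻¹) ^ ((j : ℕ) + 1)
        = ((((SE L) ^ ((j : ℕ) + 1)).symm).toPEquiv.toMatrix : Matrix (Chain L) (Chain L) ℂ) := by
      rw [hTinv, perm_pow_matrix, hsympow]
    rw [hTpow, hTinvpow, PEquiv.toMatrix_toPEquiv_mul, PEquiv.mul_toMatrix_toPEquiv]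
    ext v w
    simp only [Matrix.submatrix_apply, id_eq, Equiv.symm_symm]
    rw [AD_entry L η hη]
    have hchain : SE L (((SE L) ^ (j : ℕ)) v) = ((SE L) ^ ((j : ℕ) + 1)) v := by
      rw [pow_succ']; rfl
    rw [hchain]
    have hcond : ((((SE L) ^ ((j : ℕ) + 1)) w = ((SE L) ^ ((j : ℕ) + 1)) v))
        ↔ w = v := Equiv.apply_eq_iff_eq _
    simp only [hcond]
    have hv0 : (((SE L) ^ (j : ℕ)) v) 0 = v j := by
      rw [SE_pow_apply, rot_pow_zero L (j : ℕ) j.isLt, Fin.eta]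
    rw [hv0]
    show pauli 2 (v j) (w j) * (if ∀ k, k ≠ j → v k = w k then 1 else 0) = _
    by_cases hvw : w = v
    · subst hvw
      rw [if_pos rfl, if_pos (fun k _ => rfl), one_mul, mul_one]
    · rw [if_neg hvw, zero_mul]
      by_cases hall : ∀ k, k ≠ j → v k = w k
      · have hj : v j ≠ w j := by
          intro h
          exact hvw (funext fun k => by
            by_cases hk : k = j
            · subst hk; exact h.symm
            · exact (hall k hk).symm)
        rw [pauli_offdiag _ _ hj, zero_mul]
      · rw [if_neg hall, mul_zero]
end

section
/- Let z₀ ∈ ℂ, r > 0, and let λ₁,…,λ_M be pairwise distinct points in the open disc B(z₀,r). Let h : ℂ → ℂ be holomorphic on an open set containing the closed disc \bar{B}(z₀,r), and define g(z) = h(z)/∏_{j=1}^M (z−λ_j). Let 1 ≤ n ≤ M and let f : ℂⁿ → ℂ be holomorphic in each variable on an open set containing \bar{B}(z₀,r)ⁿ, symmetric under all permutations of its n arguments, and such that f(ω₁,…,ω_n) = 0 whenever ω_i = ω_j for some i ≠ j. Then the iterated contour integral over the circle C = {|z−z₀| = r}, traversed once counterclockwise, satisfies (1/n!) ∮_C ···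 ∮_C f(ω₁,…,ω_n) ∏_{j=1}^n g(ω_j) dω₁/(2πi) ··· dω_n/(2πi) = Σ_{S ⊆ {1,…,M}, |S| = n} f((λ_j)_{j∈S}) ∏_{j∈S} [ h(λ_j) / ∏_{k=1,k≠j}^M (λ_j − λ_k) ], where (λ_j)_{j∈S} denotes the n-tuple of points λ_j with j ∈ S (in any order, which is immaterial by symmetry of f). -/
open Complex

noncomputable def iterCircleIntegral (c : ℂ) (r : ℝ) :
    (n : ℕ) → ((Fin n → ℂ) → ℂ) → ℂ
  | 0, F => F (fun i => i.elim0)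
  | n + 1, F => ∮ z in C(c, r), iterCircleIntegral c r n (fun ω => F (Fin.cons z ω))

/-!
On the circle, partial fractions (the barycentric Lagrange formula for the constant `1`) give
`h z / ∏ₖ (z - λₖ) = ∑ⱼ (z - λⱼ)⁻¹ wⱼ h z` with `wⱼ = ∏_{k ≠ j} (λⱼ - λₖ)⁻¹`, so Cauchy's
integral formula evaluates `∮ φ g` as `2πi ∑ⱼ φ(λⱼ) Resⱼ` for every `φ` holomorphic on the
closed disc. Integrating out one variable at a time turns the `n`-fold integral into
`(2πi)ⁿ ∑_t f(λ ∘ t) ∏ᵢ Res_{t i}` over all maps `t : Fin n → Fin M`. Terms with non-injective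
`t` vanish because `f` vanishes on diagonals, and by symmetry the `n!` injective maps with a
given image `S` contribute equal terms.
-/

open Finset Metric

theorem inv_prod_sub_eq_sum_nodalWeight_mul_inv {F ι : Type*} [Field F] [DecidableEq ι]
    {s : Finset ι} {v : ι → F} {x : F} (hvs : Set.InjOn v s) (hs : s.Nonempty)
    (hx : ∀ i ∈ s, x ≠ v i) :
    (∏ i ∈ s, (x - v i))⁻¹ = ∑ i ∈ s, Lagrange.nodalWeight s v i * (x - v i)⁻¹ := by
  have h := Lagrange.eval_interpolate_not_at_node (1 : ι → F) hx
  simp only [Lagrange.interpolate_one hvs hs, Polynomial.eval_one, Lagrange.eval_nodal,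
    Pi.one_apply, mul_one] at h
  exact (eq_inv_of_mul_eq_one_right h.symm).symm

theorem sum_fin_succ_fun_eq_sum_cons {ι β : Type*} [Fintype ι] [AddCommMonoid β] {n : ℕ}
    (F : (Fin (n + 1) → ι) → β) : ∑ t, F t = ∑ j, ∑ t : Fin n → ι, F (Fin.cons j t) := by
  rw [← (Fin.consEquiv fun _ => ι).sum_comp, Fintype.sum_prod_type]
  rfl

theorem Finset.prod_orderEmbOfFin {α β : Type*} [LinearOrder α] [CommMonoid β] (s : Finset α)
    {k : ℕ} (h : s.card = k) (g : α → β) : ∏ i, g (s.orderEmbOfFin h i) = ∏ x ∈ s, g x := by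
  conv_rhs => rw [← s.image_orderEmbOfFin_univ h]
  exact (prod_image fun _ _ _ _ hab => (s.orderEmbOfFin h).injective hab).symm

theorem Finset.exists_orderEmbOfFin_comp_perm {α : Type*} [LinearOrder α] {n : ℕ}
    {t : Fin n → α} (ht : Function.Injective t) (h : (univ.image t).card = n) :
    ∃ σ : Equiv.Perm (Fin n), (univ.image t).orderEmbOfFin h ∘ σ = t := by
  refine ⟨(Tuple.sort t)⁻¹, ?_⟩
  have hsorted : t ∘ Tuple.sort t = (univ.image t).orderEmbOfFin h :=
    orderEmbOfFin_unique h (fun i => mem_image_of_mem t (mem_univ _))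
      ((Tuple.monotone_sort t).strictMono_of_injective (ht.comp (Tuple.sort t).injective))
  rw [← hsorted]
  ext i
  simp

theorem sum_eq_factorial_smul_sum_powersetCard {ι β : Type*} [Fintype ι] [LinearOrder ι]
    [AddCommMonoid β] {n : ℕ} (F : (Fin n → ι) → β)
    (hsym : ∀ (σ : Equiv.Perm (Fin n)) (t : Fin n → ι), F (t ∘ σ) = F t)
    (hvan : ∀ t, ¬ Function.Injective t → F t = 0) :
    ∑ t, F t = n.factorial • ∑ S ∈ (powersetCard n (univ : Finset ι)).attach,
      F (S.1.orderEmbOfFin (mem_powersetCard.mp S.2).2) := by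
  classical
  let e (S : {S // S ∈ powersetCard n (univ : Finset ι)}) (σ : Equiv.Perm (Fin n)) : Fin n → ι :=
    S.1.orderEmbOfFin (mem_powersetCard.mp S.2).2 ∘ σ
  let pairs := (powersetCard n (univ : Finset ι)).attach ×ˢ (univ : Finset (Equiv.Perm (Fin n)))
  let injectives := (univ : Finset (Fin n → ι)).filter Function.Injective
  have image_e (S σ) : univ.image (e S σ) = S.1 := by
    rw [← image_image, image_univ_equiv, image_orderEmbOfFin_univ]
  have e_injOn : Set.InjOn (fun p : _ × _ => e p.1 p.2) pairs := by
    rintro ⟨S, σ⟩ - ⟨S', σ'⟩ - (hp : e S σ = e S' σ')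
    obtain rfl : S = S' := Subtype.ext <| by rw [← image_e S σ, hp, image_e]
    obtain rfl : σ = σ' := Equiv.ext fun i => (S.1.orderEmbOfFin _).injective (congrFun hp i)
    rfl
  have e_surjOn : Set.SurjOn (fun p : _ × _ => e p.1 p.2) pairs injectives := by
    intro t ht
    have ht : Function.Injective t := (mem_filter.mp ht).2
    have hcard : (univ.image t).card = n := by simp [card_image_of_injective _ ht]
    obtain ⟨σ, hσ⟩ := exists_orderEmbOfFin_comp_perm ht hcard
    exact ⟨(⟨univ.image t, mem_powersetCard.mpr ⟨subset_univ _, hcard⟩⟩, σ), by simp [pairs], hσ⟩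
  calc ∑ t, F t = ∑ t ∈ injectives, F t :=
        (sum_filter_of_ne fun t _ hFt => by_contra fun ht => hFt (hvan t ht)).symm
    _ = ∑ p ∈ pairs, F (e p.1 p.2) := by
        refine (sum_nbij (fun p : _ × _ => e p.1 p.2) (fun p _ => ?_) e_injOn e_surjOn
          (fun _ _ => rfl)).symm
        exact mem_filter.mpr ⟨mem_univ _, (Finset.orderEmbOfFin _ _).injective.comp p.2.injective⟩
    _ = ∑ S ∈ (powersetCard n univ).attach, n.factorial • F (e S 1) := by
        refine (sum_product ..).trans (sum_congr rfl fun S _ => ?_)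
        simp only [e, hsym]
        rw [sum_const, card_univ, Fintype.card_perm, Fintype.card_fin]
    _ = _ := (smul_sum ..).symm

noncomputable def poleResidue {ι : Type*} [Fintype ι] [DecidableEq ι] (h : ℂ → ℂ) (lam : ι → ℂ)
    (j : ι) : ℂ :=
  h (lam j) / ∏ k ∈ univ.erase j, (lam j - lam k)

section CircleIntegral

variable {z₀ : ℂ} {r : ℝ} {ι : Type*} [Fintype ι] {lam : ι → ℂ}

theorem circleIntegrable_div_prod_sub (hr : 0 ≤ r) (hmem : ∀ k, lam k ∈ ball z₀ r) {H : ℂ → ℂ}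
    (hH : ContinuousOn H (sphere z₀ r)) :
    CircleIntegrable (fun z => H z / ∏ k, (z - lam k)) z₀ r :=
  ContinuousOn.circleIntegrable hr <| hH.div (by fun_prop) fun z hz =>
    prod_ne_zero_iff.mpr fun k _ => sub_ne_zero.mpr (sphere_disjoint_ball.ne_of_mem hz (hmem k))

variable [DecidableEq ι]

theorem circleIntegral_div_prod_sub (hr : 0 < r) (hinj : Function.Injective lam)
    (hmem : ∀ k, lam k ∈ ball z₀ r) {H : ℂ → ℂ} (hH : DifferentiableOn ℂ H (closedBall z₀ r)) :
    (∮ z in C(z₀, r), H z / ∏ k, (z - lam k)) = 2 * Real.pi * I * ∑ j, poleResidue H lam j := by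
  rcases isEmpty_or_nonempty ι with hι | hι
  · simp [(hH.diffContOnCl_ball subset_rfl).circleIntegral_eq_zero hr.le]
  have partial_fractions : Set.EqOn (fun z => H z / ∏ k, (z - lam k))
      (fun z => ∑ j, (z - lam j)⁻¹ • (Lagrange.nodalWeight univ lam j * H z)) (sphere z₀ r) := by
    intro z hz
    simp only [div_eq_mul_inv, inv_prod_sub_eq_sum_nodalWeight_mul_inv hinj.injOn univ_nonempty
      fun k _ => sphere_disjoint_ball.ne_of_mem hz (hmem k), mul_sum, smul_eq_mul]
    exact sum_congr rfl fun j _ => by ring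
  rw [circleIntegral.integral_congr hr.le partial_fractions, circleIntegral.integral_fun_sum,
    mul_sum]
  · refine sum_congr rfl fun j _ => ?_
    rw [((hH.const_mul _).diffContOnCl_ball subset_rfl).circleIntegral_sub_inv_smul (hmem j),
      poleResidue, Lagrange.nodalWeight, prod_inv_distrib, smul_eq_mul]
    ring
  · refine fun j _ => ContinuousOn.circleIntegrable hr.le ?_
    exact ((continuousOn_id.sub continuousOn_const).inv₀ fun z hz =>
      sub_ne_zero.mpr (sphere_disjoint_ball.ne_of_mem hz (hmem j))).smul
      (continuousOn_const.mul (hH.continuousOn.mono sphere_subset_closedBall))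

end CircleIntegral

def SeparatelyDifferentiableOn {n : ℕ} (f : (Fin n → ℂ) → ℂ) (V : Set ℂ) : Prop :=
  ∀ (i : Fin n) (ω : Fin n → ℂ), (∀ j, ω j ∈ V) →
    DifferentiableAt ℂ (fun z => f (Function.update ω i z)) (ω i)

namespace SeparatelyDifferentiableOn

variable {n : ℕ} {f : (Fin (n + 1) → ℂ) → ℂ} {V : Set ℂ}

theorem differentiableOn_cons (hf : SeparatelyDifferentiableOn f V) {ω : Fin n → ℂ}
    (hω : ∀ j, ω j ∈ V) : DifferentiableOn ℂ (fun z => f (Fin.cons z ω)) V := fun z hz => by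
  simpa using (hf 0 (Fin.cons z ω) (Fin.cases hz hω)).differentiableWithinAt

theorem cons (hf : SeparatelyDifferentiableOn f V) {z : ℂ} (hz : z ∈ V) :
    SeparatelyDifferentiableOn (fun ω => f (Fin.cons z ω)) V := fun i ω hω => by
  simpa [Fin.cons_update] using hf i.succ (Fin.cons z ω) (Fin.cases hz hω)

end SeparatelyDifferentiableOn

theorem iterCircleIntegral_const_mul (c : ℂ) (r : ℝ) (a : ℂ) :
    ∀ (n : ℕ) (F : (Fin n → ℂ) → ℂ),
      iterCircleIntegral c r n (fun ω => a * F ω) = a * iterCircleIntegral c r n F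
  | 0, _ => rfl
  | n + 1, F => by
    simp only [iterCircleIntegral, iterCircleIntegral_const_mul c r a n,
      circleIntegral.integral_const_mul]

theorem iterCircleIntegral_mul_prod_div_prod_sub {z₀ : ℂ} {r : ℝ} (hr : 0 < r) {ι : Type*}
    [Fintype ι] [DecidableEq ι] {lam : ι → ℂ} (hinj : Function.Injective lam)
    (hmem : ∀ k, lam k ∈ ball z₀ r) {h : ℂ → ℂ} (hh : DifferentiableOn ℂ h (closedBall z₀ r))
    {V : Set ℂ} (hVb : closedBall z₀ r ⊆ V) (n : ℕ) (f : (Fin n → ℂ) → ℂ)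
    (hf : SeparatelyDifferentiableOn f V) :
    iterCircleIntegral z₀ r n (fun ω => f ω * ∏ j, (h (ω j) / ∏ k, (ω j - lam k)))
      = (2 * Real.pi * I) ^ n * ∑ t : Fin n → ι, f (lam ∘ t) * ∏ j, poleResidue h lam (t j) := by
  induction n with
  | zero =>
    simp [iterCircleIntegral, Subsingleton.elim (lam ∘ default) Fin.elim0]
  | succ n ih =>
    have inner (z) (hz : z ∈ sphere z₀ r) :
        iterCircleIntegral z₀ r n (fun ω => f (Fin.cons z ω) *
          ∏ j, (h ((Fin.cons z ω : Fin (n + 1) → ℂ) j) /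
            ∏ k, ((Fin.cons z ω : Fin (n + 1) → ℂ) j - lam k)))
        = ∑ t : Fin n → ι, (2 * Real.pi * I) ^ n * (∏ j, poleResidue h lam (t j)) *
            (f (Fin.cons z (lam ∘ t)) * h z / ∏ k, (z - lam k)) := by
      simp only [Fin.prod_univ_succ, Fin.cons_zero, Fin.cons_succ, mul_left_comm _ (h z / _),
        iterCircleIntegral_const_mul, ih _ (hf.cons (hVb (sphere_subset_closedBall hz))),
        mul_sum]
      exact sum_congr rfl fun t _ => by ring
    have hH (t : Fin n → ι) :
        DifferentiableOn ℂ (fun z => f (Fin.cons z (lam ∘ t)) * h z) (closedBall z₀ r) :=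
      ((hf.differentiableOn_cons fun j => hVb (ball_subset_closedBall (hmem (t j)))).mono
        hVb).mul hh
    calc iterCircleIntegral z₀ r (n + 1) _
        = ∑ t : Fin n → ι, (2 * Real.pi * I) ^ n * (∏ j, poleResidue h lam (t j)) *
            ∮ z in C(z₀, r), f (Fin.cons z (lam ∘ t)) * h z / ∏ k, (z - lam k) := by
          rw [iterCircleIntegral, circleIntegral.integral_congr hr.le inner,
            circleIntegral.integral_fun_sum]
          · simp only [circleIntegral.integral_const_mul]
          · exact fun t _ => (circleIntegrable_div_prod_sub hr.le hmem
              ((hH t).continuousOn.mono sphere_subset_closedBall)).const_smul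
      _ = ∑ t : Fin n → ι, (2 * Real.pi * I) ^ n * (∏ j, poleResidue h lam (t j)) *
            (2 * Real.pi * I * ∑ j, f (Fin.cons (lam j) (lam ∘ t)) * poleResidue h lam j) := by
          refine sum_congr rfl fun t _ => ?_
          rw [circleIntegral_div_prod_sub hr hinj hmem (hH t)]
          simp only [poleResidue, mul_div_assoc]
      _ = _ := by
          rw [sum_fin_succ_fun_eq_sum_cons, sum_comm, mul_sum]
          simp only [mul_sum, Fin.comp_cons, Fin.prod_univ_succ, Fin.cons_zero, Fin.cons_succ]
          refine sum_congr rfl fun j _ => sum_congr rfl fun t _ => ?_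
          ring

theorem symmetric_multiple_integral_residue_sum_general
    (z₀ : ℂ) (r : ℝ) (hr : 0 < r) (M n : ℕ)
    (lam : Fin M → ℂ) (hinj : Function.Injective lam)
    (hmem : ∀ j, lam j ∈ Metric.ball z₀ r)
    (h : ℂ → ℂ) (U : Set ℂ) (hUb : Metric.closedBall z₀ r ⊆ U)
    (hh : DifferentiableOn ℂ h U)
    (f : (Fin n → ℂ) → ℂ) (V : Set ℂ)
    (hVb : Metric.closedBall z₀ r ⊆ V)
    (hf : ∀ (i : Fin n) (ω : Fin n → ℂ), (∀ j, ω j ∈ V) →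
      DifferentiableAt ℂ (fun z => f (Function.update ω i z)) (ω i))
    (hsym : ∀ (σ : Equiv.Perm (Fin n)) (ω : Fin n → ℂ), f (ω ∘ σ) = f ω)
    (hvan : ∀ (ω : Fin n → ℂ) (i j : Fin n), i ≠ j → ω i = ω j → f ω = 0) :
    (n.factorial : ℂ)⁻¹ * ((2 * Real.pi * Complex.I)⁻¹) ^ n *
        iterCircleIntegral z₀ r n
          (fun ω => f ω * ∏ j, (h (ω j) / ∏ k, (ω j - lam k)))
      = ∑ S ∈ (Finset.powersetCard n (Finset.univ : Finset (Fin M))).attach,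
          f (fun i => lam ((S.1.orderIsoOfFin
                ((Finset.mem_powersetCard.mp S.2).2) i : Fin M))) *
            ∏ j ∈ S.1,
              (h (lam j) / ∏ k ∈ Finset.univ.erase j, (lam j - lam k)) := by
  have cancel (X : ℂ) : (n.factorial : ℂ)⁻¹ * (2 * Real.pi * I)⁻¹ ^ n *
      ((2 * Real.pi * I) ^ n * (n.factorial • X)) = X := by
    have : (2 * Real.pi * I : ℂ) ≠ 0 := by simp [Real.pi_ne_zero, I_ne_zero]
    rw [nsmul_eq_mul, inv_pow, mul_assoc, inv_mul_cancel_left₀ (pow_ne_zero n this),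
      inv_mul_cancel_left₀ (Nat.cast_ne_zero.mpr n.factorial_ne_zero)]
  rw [iterCircleIntegral_mul_prod_div_prod_sub hr hinj hmem (hh.mono hUb) hVb n f hf,
    sum_eq_factorial_smul_sum_powersetCard (fun t => f (lam ∘ t) * ∏ j, poleResidue h lam (t j))
      (fun σ t => by
        simp only [← Function.comp_assoc, hsym, Function.comp_apply, Equiv.prod_comp σ
          fun j => poleResidue h lam (t j)])
      (fun t ht => by
        obtain ⟨i, j, hij, hne⟩ := Function.not_injective_iff.mp ht
        rw [hvan _ i j hne (congrArg lam hij), zero_mul]),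
    cancel]
  exact sum_congr rfl fun S _ => congrArg _ (prod_orderEmbOfFin S.1 _ (poleResidue h lam))

/-- The residue-summation identity: a symmetric multiple contour integral of a function
vanishing on diagonals, integrated against `∏_j g(ω_j)` with
`g(z) = h(z)/∏_{j=1}^M (z−λ_j)`, equals a sum over `n`-element subsets of the simple
poles `λ₁,…,λ_M` of the corresponding residues. -/
theorem symmetric_multiple_integral_residue_sum
    (z₀ : ℂ) (r : ℝ) (hr : 0 < r) (M n : ℕ) (hn1 : 1 ≤ n) (hnM : n ≤ M)
    (lam : Fin M → ℂ) (hinj : Function.Injective lam)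
    (hmem : ∀ j, lam j ∈ Metric.ball z₀ r)
    (h : ℂ → ℂ) (U : Set ℂ) (hU : IsOpen U) (hUb : Metric.closedBall z₀ r ⊆ U)
    (hh : DifferentiableOn ℂ h U)
    (f : (Fin n → ℂ) → ℂ) (V : Set ℂ) (hV : IsOpen V)
    (hVb : Metric.closedBall z₀ r ⊆ V)
    (hf : ∀ (i : Fin n) (ω : Fin n → ℂ), (∀ j, ω j ∈ V) →
      DifferentiableAt ℂ (fun z => f (Function.update ω i z)) (ω i))
    (hsym : ∀ (σ : Equiv.Perm (Fin n)) (ω : Fin n → ℂ), f (ω ∘ σ) = f ω)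
    (hvan : ∀ (ω : Fin n → ℂ) (i j : Fin n), i ≠ j → ω i = ω j → f ω = 0) :
    (n.factorial : ℂ)⁻¹ * ((2 * Real.pi * Complex.I)⁻¹) ^ n *
        iterCircleIntegral z₀ r n
          (fun ω => f ω * ∏ j, (h (ω j) / ∏ k, (ω j - lam k)))
      = ∑ S ∈ (Finset.powersetCard n (Finset.univ : Finset (Fin M))).attach,
          f (fun i => lam ((S.1.orderIsoOfFin
                ((Finset.mem_powersetCard.mp S.2).2) i : Fin M))) *
            ∏ j ∈ S.1,
              (h (lam j) / ∏ k ∈ Finset.univ.erase j, (lam j - lam k)) :=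
  symmetric_multiple_integral_residue_sum_general z₀ r hr M n lam hinj hmem h U hUb hh f V hVb hf
    hsym hvan
end
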